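/- arXiv:1708.04635 — 2 statements merged into one kernel-verified Lean document; each statement's English description precedes it below -/
import Mathlib

section
/- Let R be a Noetherian commutative ring, N a finitely generated R-module, and T a Noetherian commutative ring that is a faithfully flat R-algebra. Then for any ideal I of R, the contraction to R of the integral closure of the extended ideal IT relative to N ⊗_R T equals the integral closure of I relative to N: (IT)^{(N ⊗_R T)}_a ∩ R = I^{(N)}_a. -/
open Pointwise

section Defs

variable {R : Type} [CommRing R]

/-- `x` is integrally dependent on the ideal `I` relative to the module `N`:
`x ^ n • N ⊆ ∑_{i=1}^n x^(n-i) • (I^i • N)` for some `n ≥ 1`. -/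
def Ideal.RelIntDep (I : Ideal R) (N : Type) [AddCommGroup N] [Module R N] (x : R) : Prop :=
  ∃ n : ℕ, 0 < n ∧ ∀ m : N, x ^ n • m ∈
    ⨆ i ∈ Finset.Icc 1 n, x ^ (n - i) • (I ^ i • (⊤ : Submodule R N))

/-- The integral closure `I^{(N)}_a` of `I` relative to `N`, as a subset of `R`. -/
def Ideal.relIntClosure (I : Ideal R) (N : Type) [AddCommGroup N] [Module R N] : Set R :=
  {x | I.RelIntDep N x}

/-- The classical integral closure `I_a` of an ideal, as a subset of `R`. -/
def Ideal.intClosure (I : Ideal R) : Set R :=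
  {x | ∃ n : ℕ, 0 < n ∧ ∃ r : ℕ → R, (∀ i ∈ Finset.Icc 1 n, r i ∈ I ^ i) ∧
    x ^ n + ∑ i ∈ Finset.Icc 1 n, r i * x ^ (n - i) = 0}

/-- `mAss_R N`: the set of minimal members of `Ass_R N`. -/
def mAss (R : Type) [CommRing R] (N : Type) [AddCommGroup N] [Module R N] : Set (Ideal R) :=
  {p | Minimal (· ∈ associatedPrimes R N) p}

/-- `Ass_R (R/J)` for a subset `J ⊆ R`: primes of the form `(J :_R x)`. -/
def assQuot (J : Set R) : Set (Ideal R) :=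
  {p | p.IsPrime ∧ ∃ x : R, (p : Set R) = {r : R | r * x ∈ J}}

/-- `Ass_R (J/K)` for subsets `K ⊆ J` of `R`: primes of the form `(K :_R x)` with `x ∈ J`. -/
def assQuot₂ (J K : Set R) : Set (Ideal R) :=
  {p | p.IsPrime ∧ ∃ x ∈ J, (p : Set R) = {r : R | r * x ∈ K}}

/-- `S(J) = ∪_{s ∈ S} (J :_R s)`. -/
def sat (S : Set R) (J : Set R) : Set R := {x | ∃ s ∈ S, s * x ∈ J}

/-- `(J :_R K)` for subsets of `R`. -/
def setColon (J K : Set R) : Set R := {x | ∀ y ∈ K, x * y ∈ J}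

/-- `(J :_R ⟨K⟩) = ∪_{n ≥ 1} (J :_R K^n)`. -/
def colonPow (J : Set R) (K : Ideal R) : Set R :=
  {x | ∃ n : ℕ, 0 < n ∧ ∀ y ∈ K ^ n, x * y ∈ J}

end Defs

/-!
Extension of scalars along `R → T` sends `∑ x^(n-i) I^i N` to `∑ x^(n-i) (IT)^i (T ⊗ N)`, since
extending a submodule is left adjoint to pulling back along `N → T ⊗ N` (so commutes with
suprema) and is compatible with ideal and scalar multiplication. For faithfully flat `T` it
moreover reflects inclusions, so `x^n N ⊆ ∑ x^(n-i) I^i N` holds over `R` iff its base change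
holds over `T`.
-/

open TensorProduct

namespace Submodule

variable {R M A : Type*} [CommRing R] [CommRing A] [Algebra R A] [AddCommGroup M] [Module R M]

theorem baseChange_le_iff_le_comap {p : Submodule R M} {Q : Submodule A (A ⊗[R] M)} :
    p.baseChange A ≤ Q ↔ p ≤ (Q.restrictScalars R).comap (TensorProduct.mk R A M 1) := by
  rw [baseChange_eq_span, span_le, ← map_le_iff_le_comap]
  rfl

variable (A) in
theorem gc_baseChange :
    GaloisConnection (baseChange A : Submodule R M → Submodule A (A ⊗[R] M))
      fun Q ↦ (Q.restrictScalars R).comap (TensorProduct.mk R A M 1) :=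
  fun _ _ ↦ baseChange_le_iff_le_comap

theorem baseChange_ideal_smul (J : Ideal R) (p : Submodule R M) :
    (J • p).baseChange A = J.map (algebraMap R A) • p.baseChange A := by
  conv_lhs => rw [← J.span_eq, ← p.span_eq, span_smul_span, baseChange_span]
  rw [Ideal.map, baseChange_eq_span, map_coe, span_smul_span, ← Set.image2_smul,
    ← Set.image2_smul]
  congr 1
  exact Set.image_image2_distrib fun a m ↦ by
    rw [mk_apply, mk_apply, tmul_smul, algebraMap_smul]

theorem baseChange_pointwise_smul (r : R) (p : Submodule R M) :
    (r • p).baseChange A = algebraMap R A r • p.baseChange A := by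
  rw [← ideal_span_singleton_smul, ← ideal_span_singleton_smul, baseChange_ideal_smul,
    Ideal.map_span, Set.image_singleton]

end Submodule

namespace Ideal

variable {R : Type} [CommRing R]

theorem relIntDep_iff_exists_pow_smul_top_le (I : Ideal R) (N : Type) [AddCommGroup N]
    [Module R N] (x : R) :
    I.RelIntDep N x ↔ ∃ n : ℕ, 0 < n ∧ x ^ n • (⊤ : Submodule R N) ≤
      ⨆ i ∈ Finset.Icc 1 n, x ^ (n - i) • (I ^ i • (⊤ : Submodule R N)) := by
  refine exists_congr fun n ↦ and_congr_right fun _ ↦ ⟨fun h ↦ ?_, fun h m ↦ h ?_⟩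
  · rintro - ⟨m, -, rfl⟩
    exact h m
  · exact Submodule.smul_mem_pointwise_smul m _ ⊤ trivial

theorem baseChange_iSup_pow_smul_pow_smul_top (I : Ideal R) (N : Type) [AddCommGroup N]
    [Module R N] (T : Type) [CommRing T] [Algebra R T] (x : R) (n : ℕ) :
    (⨆ i ∈ Finset.Icc 1 n, x ^ (n - i) • (I ^ i • (⊤ : Submodule R N))).baseChange T =
      ⨆ i ∈ Finset.Icc 1 n, algebraMap R T x ^ (n - i) •
        ((I.map (algebraMap R T)) ^ i • (⊤ : Submodule T (T ⊗[R] N))) := by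
  simp only [(Submodule.gc_baseChange T).l_iSup₂, Submodule.baseChange_pointwise_smul,
    Submodule.baseChange_ideal_smul, Submodule.baseChange_top, map_pow, Ideal.map_pow]

end Ideal

open TensorProduct in
theorem preimage_relIntClosure_map_eq_general {R : Type} [CommRing R]
    (N : Type) [AddCommGroup N] [Module R N]
    (T : Type) [CommRing T] [Algebra R T] [Module.FaithfullyFlat R T]
    (I : Ideal R) :
    (algebraMap R T) ⁻¹' ((I.map (algebraMap R T)).relIntClosure (T ⊗[R] N)) =
      I.relIntClosure N := by
  ext x
  simp only [Set.mem_preimage, Ideal.relIntClosure, Set.mem_ofPred_eq,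
    Ideal.relIntDep_iff_exists_pow_smul_top_le]
  refine exists_congr fun n ↦ and_congr_right fun _ ↦ ?_
  rw [← Ideal.baseChange_iSup_pow_smul_pow_smul_top, ← map_pow, ← Submodule.baseChange_top,
    ← Submodule.baseChange_pointwise_smul, Submodule.baseChange_le_iff]

open TensorProduct in
/-- For a Noetherian faithfully flat `R`-algebra `T`,
`(IT)^{(N ⊗_R T)}_a ∩ R = I^{(N)}_a`. -/
theorem preimage_relIntClosure_map_eq {R : Type} [CommRing R] [IsNoetherianRing R]
    (N : Type) [AddCommGroup N] [Module R N] [Module.Finite R N]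
    (T : Type) [CommRing T] [IsNoetherianRing T] [Algebra R T] [Module.FaithfullyFlat R T]
    (I : Ideal R) :
    (algebraMap R T) ⁻¹' ((I.map (algebraMap R T)).relIntClosure (T ⊗[R] N)) =
      I.relIntClosure N :=
  preimage_relIntClosure_map_eq_general N T I
end

section
/- Let I be an ideal of a Noetherian commutative ring R, let S be a multiplicatively closed subset of R, and let N be a finitely generated R-module. Then ⋂_{n≥1} S((I^n)^{(N)}_a) = ⋂ { p : p ∈ mAss_R N and (I + p) ∩ S = ∅ }. -/
open Pointwise

/-!
`⊇`: if `x` lies in every minimal prime `p` of `Ann N` with `(I + p) ∩ S = ∅`, then for each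
minimal prime `q` of `Ann N` some `v ∈ S` has `v x ∈ Iⁿ + q` (take `v = 1`, or a power of an
element of `(I + q) ∩ S`). For the product `s` of these `v` there are `b_q ∈ Iⁿ` with
`∏_q (s x - b_q) ∈ √(Ann N)`, and expanding a power of this product exhibits `s x` as integrally
dependent on `Iⁿ` relative to `N`.

`⊆`: let `p ⊇ Ann N` be prime with `(I + p) ∩ S = ∅` and `x ∉ p`, and pass to the Noetherian
domain `D = (R/p)_S`, in which `S` consists of units and `ID ≠ D`. A reduction argument turns
`u ∈ J^{(N)}_a` into `u^{K+m} N ⊆ J^{m+1} N` for all `m`, and Cayley–Hamilton then gives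
`u^{(K+m)d} ∈ J^{m+1} + Ann N` with `d` depending only on `N`. By Artin–Rees, `x^j ∈ (ID)^A`
forces `A ≤ c j`, which contradicts `x^{(K+m)d} ∈ (ID)^{k(m+1)}` for `k = dc + 1` and `m` large.
-/
namespace Ideal

section CommSemiring

variable {R : Type*} [CommSemiring R]

theorem sup_span_singleton_pow_succ_le (J : Ideal R) (u : R) (n : ℕ) :
    (J ⊔ span {u}) ^ (n + 1) ≤ J * (J ⊔ span {u}) ^ n ⊔ span {u ^ (n + 1)} := by
  induction n with
  | zero => simp
  | succ n ih =>
    calc (J ⊔ span {u}) ^ (n + 2)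
        ≤ (J * (J ⊔ span {u}) ^ n ⊔ span {u ^ (n + 1)}) * (J ⊔ span {u}) :=
          pow_succ (J ⊔ span {u}) (n + 1) ▸ mul_mono_left ih
      _ ≤ J * (J ⊔ span {u}) ^ (n + 1) ⊔ span {u ^ (n + 2)} := by
        rw [sup_mul, mul_sup (span _), span_singleton_mul_span_singleton, ← pow_succ, mul_assoc,
          ← pow_succ]
        refine sup_le le_sup_left (sup_le ?_ le_sup_right)
        rw [mul_comm]
        exact le_sup_of_le_left (mul_mono_right ((span_singleton_le_iff_mem _).mpr
          (pow_mem_pow (mem_sup_right (mem_span_singleton_self u)) _)))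

theorem span_singleton_pow_mul_pow_le (J : Ideal R) (u : R) {n i : ℕ} (hi : i ∈ Finset.Icc 1 n) :
    span {u ^ (n - i)} * J ^ i ≤ J * (J ⊔ span {u}) ^ (n - 1) := by
  obtain ⟨j, rfl⟩ : ∃ j, i = j + 1 := ⟨i - 1, by grind⟩
  have hu : span {u ^ (n - (j + 1))} ≤ (J ⊔ span {u}) ^ (n - (j + 1)) :=
    (span_singleton_le_iff_mem _).mpr (pow_mem_pow (mem_sup_right (mem_span_singleton_self u)) _)
  calc span {u ^ (n - (j + 1))} * J ^ (j + 1) = J * (J ^ j * span {u ^ (n - (j + 1))}) := by ring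
    _ ≤ J * ((J ⊔ span {u}) ^ j * (J ⊔ span {u}) ^ (n - (j + 1))) :=
      mul_mono_right (mul_le_mul' (pow_right_mono le_sup_left j) hu)
    _ = J * (J ⊔ span {u}) ^ (n - 1) := by rw [← pow_add]; congr 2; grind

theorem pow_add_smul_le_of_pow_succ_smul_le {M : Type*} [AddCommMonoid M] [Module R M]
    {J Q : Ideal R} {n : ℕ} {P : Submodule R M} (h : Q ^ (n + 1) • P ≤ (J * Q ^ n) • P)
    (m : ℕ) : Q ^ (n + 1 + m) • P ≤ (J ^ (m + 1) * Q ^ n) • P := by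
  induction m with
  | zero => simpa using h
  | succ m ih =>
    calc Q ^ (n + 1 + (m + 1)) • P = Q • Q ^ (n + 1 + m) • P := by
          rw [← add_assoc, pow_succ', Submodule.mul_smul]
      _ ≤ Q • (J ^ (m + 1) * Q ^ n) • P := Submodule.smul_mono le_rfl ih
      _ = J ^ (m + 1) • Q ^ (n + 1) • P := by
          rw [← Submodule.mul_smul, ← Submodule.mul_smul, pow_succ' Q n, mul_left_comm]
      _ ≤ J ^ (m + 1) • (J * Q ^ n) • P := Submodule.smul_mono le_rfl h
      _ = (J ^ (m + 2) * Q ^ n) • P := by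
          rw [← Submodule.mul_smul, ← mul_assoc, ← pow_succ]

end CommSemiring

variable {R : Type*} [CommRing R]

theorem exists_mem_pow_sub_of_pow_mul_mem_pow [IsNoetherianRing R] (𝔠 : Ideal R) {z : R}
    (hz : z ∈ nonZeroDivisors R) :
    ∃ c, ∀ j A (d : R), z ^ j * d ∈ 𝔠 ^ A → d ∈ 𝔠 ^ (A - j * c) := by
  obtain ⟨c, hc⟩ := 𝔠.exists_pow_inf_eq_pow_smul (span {z})
  have hstep (A : ℕ) (d : R) (h : z * d ∈ 𝔠 ^ A) : d ∈ 𝔠 ^ (A - c) := by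
    rcases lt_or_ge A c with hA | hA
    · simp [Nat.sub_eq_zero_of_le hA.le]
    have hmem : z * d ∈ 𝔠 ^ A • (⊤ : Submodule R R) ⊓ span {z} :=
      ⟨by simpa using h, mem_span_singleton'.mpr ⟨d, mul_comm d z⟩⟩
    rw [hc A hA] at hmem
    obtain ⟨b, hb, hbz⟩ := mem_mul_span_singleton.mp
      (Submodule.smul_mono le_rfl inf_le_right hmem : z * d ∈ 𝔠 ^ (A - c) * span {z})
    rwa [(mul_cancel_left_mem_nonZeroDivisors hz).mp (hbz.symm.trans (mul_comm b z))]
  refine ⟨c, fun j ↦ ?_⟩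
  induction j with
  | zero => simp
  | succ j ih =>
    intro A d h
    have := hstep _ _ (ih A (z * d) (by rwa [← mul_assoc, ← pow_succ]))
    rwa [Nat.sub_sub, ← Nat.succ_mul] at this

theorem exists_le_mul_of_pow_mem_pow [IsNoetherianRing R] {𝔠 : Ideal R} (h𝔠 : 𝔠 ≠ ⊤) {z : R}
    (hz : z ∈ nonZeroDivisors R) : ∃ c, ∀ j A, z ^ j ∈ 𝔠 ^ A → A ≤ j * c := by
  obtain ⟨c, hc⟩ := 𝔠.exists_mem_pow_sub_of_pow_mul_mem_pow hz
  refine ⟨c, fun j A h ↦ ?_⟩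
  have h1 := hc j A 1 (by rwa [mul_one])
  rw [← eq_top_iff_one, pow_eq_top_iff] at h1
  exact Nat.sub_eq_zero_iff_le.mp (h1.resolve_left h𝔠)

end Ideal

theorem Module.exists_pow_mem_sup_annihilator_of_smul_mem (R N : Type*) [CommRing R]
    [AddCommGroup N] [Module R N] [Module.Finite R N] :
    ∃ d : ℕ, ∀ (r : R) (G : Ideal R), (∀ y : N, r • y ∈ G • (⊤ : Submodule R N)) →
      r ^ d ∈ G ⊔ Module.annihilator R N := by
  refine ⟨(⊤ : Submodule R N).spanFinrank, fun r G hr ↦ ?_⟩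
  obtain ⟨p, hmonic, hdeg, hcoeff, hp⟩ :=
    LinearMap.exists_monic_and_natDegree_eq_and_coeff_mem_pow_and_aeval_eq_zero R
      (algebraMap R (Module.End R N) r) G (by rintro _ ⟨y, rfl⟩; exact hr y)
  have hann : p.eval r ∈ Module.annihilator R N := Module.mem_annihilator.mpr fun y ↦ by
    rw [← Module.algebraMap_end_apply R R N,
      ← Polynomial.aeval_algebraMap_apply_eq_algebraMap_eval, hp, LinearMap.zero_apply]
  have hlow : p.eval r - r ^ p.natDegree ∈ G := by
    rw [Polynomial.eval_eq_sum_range, Finset.sum_range_succ, hmonic.coeff_natDegree, one_mul,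
      add_sub_cancel_right]
    refine Submodule.sum_mem _ fun i hi ↦ G.mul_mem_right _ ?_
    exact Ideal.pow_le_self (by grind) (hcoeff i)
  rw [← hdeg]
  exact Submodule.mem_sup.mpr ⟨_, G.neg_mem hlow, _, hann, by ring⟩

theorem Polynomial.coeff_X_sub_C_mem_pow {R : Type*} [CommRing R] {J : Ideal R} {b : R}
    (hb : b ∈ J) (k : ℕ) : (X - C b).coeff k ∈ J ^ ((X - C b).natDegree - k) := by
  nontriviality R
  rw [natDegree_X_sub_C]
  rcases k with _ | _ | k <;> simp [coeff_X, coeff_C, hb]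

section RelIntDep

variable {R N : Type} [CommRing R] [AddCommGroup N] [Module R N]

theorem Ideal.RelIntDep.exists_pow_add_smul_mem {J : Ideal R} {u : R} (h : J.RelIntDep N u) :
    ∃ K, ∀ m (y : N), u ^ (K + m) • y ∈ J ^ (m + 1) • (⊤ : Submodule R N) := by
  obtain ⟨K, hK, hdep⟩ := h
  obtain ⟨n, rfl⟩ : ∃ n, K = n + 1 := ⟨K - 1, by omega⟩
  set Q := J ⊔ Ideal.span {u}
  have hsum : (⨆ i ∈ Finset.Icc 1 (n + 1), u ^ (n + 1 - i) • (J ^ i • (⊤ : Submodule R N))) ≤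
      (J * Q ^ n) • ⊤ := iSup₂_le fun i hi ↦ by
    rw [← Submodule.ideal_span_singleton_smul, ← Submodule.mul_smul]
    exact Submodule.smul_mono_left (Ideal.span_singleton_pow_mul_pow_le J u hi)
  have hred : Q ^ (n + 1) • (⊤ : Submodule R N) ≤ (J * Q ^ n) • ⊤ := by
    refine (Submodule.smul_mono_left (Ideal.sup_span_singleton_pow_succ_le J u n)).trans ?_
    rw [Submodule.sup_smul, Submodule.ideal_span_singleton_smul]
    refine sup_le le_rfl ?_
    rintro _ ⟨y, -, rfl⟩
    exact hsum (hdep y)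
  refine ⟨n + 1, fun m y ↦ ?_⟩
  have hmem : u ^ (n + 1 + m) • y ∈ Q ^ (n + 1 + m) • (⊤ : Submodule R N) :=
    Submodule.smul_mem_smul
      (Ideal.pow_mem_pow (Ideal.mem_sup_right (Ideal.mem_span_singleton_self u)) _) trivial
  exact Submodule.smul_mono_left Ideal.mul_le_left
    (Ideal.pow_add_smul_le_of_pow_succ_smul_le hred m hmem)

open Polynomial in
theorem Ideal.relIntDep_of_monic_of_eval_mem_annihilator {J : Ideal R} {u : R} {p : R[X]}
    (hp : p.Monic) (hcoeff : ∀ i, p.coeff i ∈ J ^ (p.natDegree - i))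
    (hann : p.eval u ∈ Module.annihilator R N) : J.RelIntDep N u := by
  set d := p.natDegree
  refine ⟨d + 1, d.succ_pos, fun y ↦ ?_⟩
  have hsplit : u ^ (d + 1) = p.eval u * u - ∑ i ∈ Finset.range d, p.coeff i * u ^ (i + 1) := by
    rw [eval_eq_sum_range, Finset.sum_range_succ, hp.coeff_natDegree, add_mul, Finset.sum_mul]
    simp only [pow_succ, mul_assoc, one_mul]
    ring
  rw [hsplit, sub_smul, mul_smul, Module.mem_annihilator.mp hann, zero_sub, Finset.sum_smul]
  refine Submodule.neg_mem _ (Submodule.sum_mem _ fun i hi ↦ ?_)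
  have hi : i < d := Finset.mem_range.mp hi
  have hterm : (p.coeff i * u ^ (i + 1)) • y =
      u ^ (d + 1 - (d - i)) • (p.coeff i • y) := by
    rw [show d + 1 - (d - i) = i + 1 by omega, smul_smul, mul_comm]
  rw [hterm]
  exact Submodule.mem_iSup_of_mem (d - i) (Submodule.mem_iSup_of_mem
    (Finset.mem_Icc.mpr ⟨by omega, by omega⟩) (Submodule.smul_mem_pointwise_smul _ _ _
      (Submodule.smul_mem_smul (hcoeff i) trivial)))

end RelIntDep

section Noetherian

variable {R N : Type} [CommRing R] [IsNoetherianRing R] [AddCommGroup N] [Module R N]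

open Polynomial in
theorem Ideal.relIntDep_of_forall_minimalPrimes {J : Ideal R} {u : R}
    (h : ∀ q ∈ (Module.annihilator R N).minimalPrimes, u ∈ J ⊔ q) : J.RelIntDep N u := by
  set F := (Module.annihilator R N).finite_minimalPrimes_of_isNoetherianRing.toFinset
  have hb : ∀ q ∈ F, ∃ b ∈ J, u - b ∈ q := fun q hq ↦ by
    obtain ⟨b, hb, c, hc, rfl⟩ := Submodule.mem_sup.mp (h q (Set.Finite.mem_toFinset _ |>.mp hq))
    exact ⟨b, hb, by simpa using hc⟩
  choose! b hbJ hbq using hb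
  obtain ⟨t, ht⟩ : ∃ t, (∏ q ∈ F, (u - b q)) ^ t ∈ Module.annihilator R N := by
    rw [← Ideal.mem_radical_iff, ← Ideal.sInf_minimalPrimes]
    refine Submodule.mem_sInf.mpr fun q hq ↦ ?_
    have hqF : q ∈ F := Set.Finite.mem_toFinset _ |>.mpr hq
    exact Ideal.mem_of_dvd q (Finset.dvd_prod_of_mem _ hqF) (hbq q hqF)
  -- each root `b q` occurs `t` times
  set f : Ideal R × ℕ → R[X] := fun qi ↦ X - C (b qi.1)
  have hmonic : ∀ qi ∈ F ×ˢ Finset.range t, (f qi).Monic := fun _ _ ↦ monic_X_sub_C _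
  refine Ideal.relIntDep_of_monic_of_eval_mem_annihilator (p := ∏ qi ∈ F ×ˢ Finset.range t, f qi)
    (monic_prod_of_monic _ _ hmonic) (fun k ↦ ?_) ?_
  · rw [natDegree_prod_of_monic _ _ hmonic]
    exact coeff_prod_mem_ideal_pow_tsub _ _ J _
      (fun qi hqi ↦ coeff_X_sub_C_mem_pow (hbJ qi.1 (Finset.mem_product.mp hqi).1)) k
  · simpa [f, eval_prod, Finset.prod_product, Finset.prod_pow] using ht

theorem mem_sat_relIntClosure_of_forall_minimalPrimes (J : Ideal R) (S : Submonoid R)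
    {x : R} (h : ∀ q ∈ (Module.annihilator R N).minimalPrimes, ∃ v ∈ S, v * x ∈ J ⊔ q) :
    x ∈ sat (S : Set R) (J.relIntClosure N) := by
  classical
  set F := (Module.annihilator R N).finite_minimalPrimes_of_isNoetherianRing.toFinset
  choose! v hvS hvx using h
  have hS : ∏ q ∈ F, v q ∈ S := prod_mem fun q hq ↦ hvS q (Set.Finite.mem_toFinset _ |>.mp hq)
  refine ⟨∏ q ∈ F, v q, hS, Ideal.relIntDep_of_forall_minimalPrimes fun q hq ↦ ?_⟩
  rw [← Finset.mul_prod_erase F v (Set.Finite.mem_toFinset _ |>.mpr hq), mul_right_comm]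
  exact Ideal.mul_mem_right _ _ (hvx q hq)

theorem mem_mAss_of_mem_minimalPrimes [Module.Finite R N] {q : Ideal R}
    (hq : q ∈ (Module.annihilator R N).minimalPrimes) : q ∈ mAss R N :=
  ⟨Module.associatedPrimes.minimalPrimes_annihilator_subset_associatedPrimes R N hq,
    fun _ hp hpq ↦
      hq.2 ⟨hp.isPrime, Submodule.annihilator_top (R := R) (M := N) ▸ hp.annihilator_le⟩ hpq⟩

end Noetherian

section Forward

variable {R N : Type} [CommRing R] [AddCommGroup N] [Module R N] [Module.Finite R N]

theorem map_eq_zero_of_forall_mem_sat_relIntClosure_pow {D : Type*} [CommRing D] [IsDomain D]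
    [IsNoetherianRing D] (φ : R →+* D) (I : Ideal R) (S : Set R) {x : R}
    (hann : Module.annihilator R N ≤ RingHom.ker φ) (hS : ∀ s ∈ S, IsUnit (φ s))
    (hI : I.map φ ≠ ⊤) (hx : ∀ k, 1 ≤ k → x ∈ sat S ((I ^ k).relIntClosure N)) : φ x = 0 := by
  by_contra hx0
  obtain ⟨c, hc⟩ := Ideal.exists_le_mul_of_pow_mem_pow hI (mem_nonZeroDivisors_of_ne_zero hx0)
  obtain ⟨d, hd⟩ := Module.exists_pow_mem_sup_annihilator_of_smul_mem R N
  obtain ⟨s, hs, hsx⟩ := hx (d * c + 1) (by omega)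
  obtain ⟨K, hK⟩ := Ideal.RelIntDep.exists_pow_add_smul_mem hsx
  set m := K * d * c
  obtain ⟨a, ha, b, hb, hab⟩ := Submodule.mem_sup.mp (pow_mul (s * x) (K + m) d ▸ hd _ _ (hK m))
  have hmap : φ x ^ ((K + m) * d) ∈ I.map φ ^ ((d * c + 1) * (m + 1)) := by
    rw [← Ideal.unit_mul_mem_iff_mem _ ((hS s hs).pow _), ← mul_pow, ← map_mul, ← map_pow, ← hab,
      map_add, RingHom.mem_ker.mp (hann hb), add_zero, pow_mul, ← Ideal.map_pow, ← Ideal.map_pow]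
    exact Ideal.mem_map_of_mem φ ha
  have : (d * c + 1) * (K * d * c + 1) ≤ (K + K * d * c) * d * c := hc _ _ hmap
  nlinarith

theorem mem_of_forall_mem_sat_relIntClosure_pow [IsNoetherianRing R] (I : Ideal R)
    (S : Submonoid R) {p : Ideal R} [p.IsPrime] (hann : Module.annihilator R N ≤ p)
    (hdisj : Disjoint (S : Set R) ((I ⊔ p : Ideal R) : Set R)) {x : R}
    (hx : ∀ k, 1 ≤ k → x ∈ sat (S : Set R) ((I ^ k).relIntClosure N)) : x ∈ p := by
  set T := S.map (Ideal.Quotient.mk p)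
  have hT : T ≤ nonZeroDivisors (R ⧸ p) := by
    rintro _ ⟨s, hs, rfl⟩
    refine mem_nonZeroDivisors_of_ne_zero fun hs0 ↦ Set.disjoint_left.mp hdisj hs ?_
    exact Ideal.mem_sup_right (Ideal.Quotient.eq_zero_iff_mem.mp hs0)
  have := IsLocalization.isDomain_localization hT
  have := IsLocalization.isNoetherianRing T (Localization T) inferInstance
  set φ := (algebraMap (R ⧸ p) (Localization T)).comp (Ideal.Quotient.mk p)
  have hφ : φ x = 0 := by
    refine map_eq_zero_of_forall_mem_sat_relIntClosure_pow φ I S (fun r hr ↦ ?_)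
      (fun s hs ↦ IsLocalization.map_units (Localization T)
        (⟨_, Submonoid.mem_map_of_mem (Ideal.Quotient.mk p) hs⟩ : T))
      ?_ hx
    · rw [RingHom.mem_ker, RingHom.comp_apply, Ideal.Quotient.eq_zero_iff_mem.mpr (hann hr),
        map_zero]
    · rw [← Ideal.map_map, IsLocalization.map_algebraMap_ne_top_iff_disjoint T]
      refine Set.disjoint_left.mpr ?_
      rintro _ ⟨s, hs, rfl⟩ hsI
      exact Set.disjoint_left.mp hdisj hs (Ideal.mem_quotient_iff_mem_sup.mp hsI)
  rw [← Ideal.Quotient.eq_zero_iff_mem]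
  exact IsLocalization.injective (Localization T) hT (hφ.trans (map_zero _).symm)

end Forward

/-- `⋂_{n ≥ 1} S((I^n)^{(N)}_a) = ⋂ {p ∈ mAss_R N : (I + p) ∩ S = ∅}`. -/
theorem inter_sat_relIntClosure_pow_eq {R : Type} [CommRing R] [IsNoetherianRing R]
    (I : Ideal R) (S : Submonoid R) (N : Type) [AddCommGroup N] [Module R N]
    [Module.Finite R N] :
    (⋂ n ∈ {n : ℕ | 1 ≤ n}, sat (S : Set R) ((I ^ n).relIntClosure N)) =
      ⋂ p ∈ {p : Ideal R | p ∈ mAss R N ∧ ((I + p : Ideal R) : Set R) ∩ (S : Set R) = ∅},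
        (p : Set R) := by
  ext x
  simp only [Set.mem_iInter₂, Set.mem_ofPred_eq]
  constructor
  · rintro hx p ⟨hp, hdisj⟩
    have := hp.1.isPrime
    refine mem_of_forall_mem_sat_relIntClosure_pow I S ?_
      (Set.disjoint_iff_inter_eq_empty.mpr (Set.inter_comm _ _ ▸ hdisj)) hx
    exact Submodule.annihilator_top (R := R) (M := N) ▸ hp.1.annihilator_le
  · intro hx k _
    refine mem_sat_relIntClosure_of_forall_minimalPrimes _ S fun q hq ↦ ?_
    rcases Set.eq_empty_or_nonempty (((I + q : Ideal R) : Set R) ∩ S) with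
      hdisj | ⟨v, hvIq, hvS⟩
    · have hxq : x ∈ q := hx q ⟨mem_mAss_of_mem_minimalPrimes hq, hdisj⟩
      exact ⟨1, S.one_mem, by simpa using Ideal.mem_sup_right hxq⟩
    · rw [SetLike.mem_coe, Submodule.add_eq_sup] at hvIq
      have hpow : (I ⊔ q) ^ (k + 1) ≤ I ^ k ⊔ q ^ 1 := Ideal.sup_pow_add_le_pow_sup_pow
      rw [pow_one] at hpow
      exact ⟨v ^ (k + 1), pow_mem hvS _,
        Ideal.mul_mem_right _ _ (hpow (Ideal.pow_mem_pow hvIq _))⟩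
end
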